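/- The OR recourse of a route is at least the probability that its total demand exceeds the capacity times the cheapest available recourse action: for every path p = (i_1, …, i_t) of distinct customers, Q̄^OR_p ≥ P[ ∑_{k=1}^{t} ξ_{i_k} > Q ] · c^R, where c^R := min( min_{1 ≤ j ≤ t} c^F_{i_j}, min_{1 ≤ j < l ≤ t} c^P_{i_j, i_l} ) (the minimum over the second family being omitted when t = 1). -/

import Mathlib

open ENNReal MeasureTheory

/-- `Ψ(s, q) = max(⌈(s − q)/Q⌉, 0)`. -/
noncomputable def psi (Q s q : ℕ) : ℕ := (⌈((s : ℚ) - (q : ℚ)) / (Q : ℚ)⌉).toNat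

/-- The optimal-restocking (OR) expected cost-to-go `F(i, L, q)`. -/
noncomputable def orF {N : Type*} (ρ : N → PMF ℕ) (Q : ℕ) (cF : N → ℝ) (cP : N → N → ℝ) :
    N → List N → ℕ → ℝ≥0∞
  | _, [], _ => 0
  | i, j :: L', q =>
    min
      (∑' s : ℕ, (ENNReal.ofReal (cF j) * (psi Q s q : ℝ≥0∞)
          + orF ρ Q cF cP j L' (psi Q s q * Q + q - s)) * ρ j s)
      (ENNReal.ofReal (cP i j) +
        ∑' s : ℕ, (ENNReal.ofReal (cF j) * (psi Q s Q : ℝ≥0∞)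
          + orF ρ Q cF cP j L' (psi Q s Q * Q + Q - s)) * ρ j s)

/-- The OR cost-to-go `H(j :: L', q)` of proceeding directly to customer `j`. -/
noncomputable def orH {N : Type*} (ρ : N → PMF ℕ) (Q : ℕ) (cF : N → ℝ) (cP : N → N → ℝ)
    (j : N) (L' : List N) (q : ℕ) : ℝ≥0∞ :=
  ∑' s : ℕ, (ENNReal.ofReal (cF j) * (psi Q s q : ℝ≥0∞)
      + orF ρ Q cF cP j L' (psi Q s q * Q + q - s)) * ρ j s

/-- `Q̄ᴼᴿ_p = H(p, Q)`. -/
noncomputable def QbarOR {N : Type*} (ρ : N → PMF ℕ) (Q : ℕ) (cF : N → ℝ)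
    (cP : N → N → ℝ) : List N → ℝ≥0∞
  | [] => 0
  | j :: L' => orH ρ Q cF cP j L' Q

/-- The list of ordered pairs `(i_j, i_l)` with `j < l` of a list. -/
def orderedPairs {N : Type*} : List N → List (N × N)
  | [] => []
  | a :: L => (L.map fun b => (a, b)) ++ orderedPairs L

/-! ### Auxiliary definitions and lemmas -/

/-- Probability that the total demand of the list exceeds `q`, written recursively. -/
noncomputable def tailProb {N : Type*} (ρ : N → PMF ℕ) : List N → ℕ → ℝ≥0∞
  | [], _ => 0
  | j :: L, q => ∑' s : ℕ, (if q < s then 1 else tailProb ρ L (q - s)) * ρ j s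

lemma tailProb_le_one {N : Type*} (ρ : N → PMF ℕ) : ∀ (L : List N) (q : ℕ),
    tailProb ρ L q ≤ 1
  | [], _ => zero_le_one
  | j :: L, q => by
    rw [tailProb]
    calc ∑' s : ℕ, (if q < s then 1 else tailProb ρ L (q - s)) * ρ j s
        ≤ ∑' s : ℕ, 1 * ρ j s := by
          refine ENNReal.tsum_le_tsum fun s => mul_le_mul_left ?_ _
          split
          · exact le_rfl
          · exact tailProb_le_one ρ L _
      _ = 1 := by simp [(ρ j).tsum_coe]

lemma psi_eq_zero {Q s q : ℕ} (h : s ≤ q) : psi Q s q = 0 := by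
  rw [psi, Int.toNat_eq_zero]
  refine Int.ceil_le.2 ?_
  push_cast
  apply div_nonpos_of_nonpos_of_nonneg
  · simpa using (Nat.cast_le (α := ℚ)).2 h
  · positivity

lemma one_le_psi {Q s q : ℕ} (hQ : 1 ≤ Q) (h : q < s) : 1 ≤ psi Q s q := by
  rw [psi]
  have : (0 : ℤ) < ⌈((s : ℚ) - (q : ℚ)) / (Q : ℚ)⌉ := by
    rw [Int.ceil_pos]
    apply div_pos
    · simpa using (Nat.cast_lt (α := ℚ)).2 h
    · exact_mod_cast Nat.lt_of_lt_of_le Nat.zero_lt_one hQ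
  omega

lemma orF_nil {N : Type*} (ρ : N → PMF ℕ) (Q : ℕ) (cF : N → ℝ) (cP : N → N → ℝ)
    (i : N) (q : ℕ) : orF ρ Q cF cP i [] q = 0 := rfl

lemma orF_cons {N : Type*} (ρ : N → PMF ℕ) (Q : ℕ) (cF : N → ℝ) (cP : N → N → ℝ)
    (i j : N) (L' : List N) (q : ℕ) :
    orF ρ Q cF cP i (j :: L') q =
      min (orH ρ Q cF cP j L' q) (ENNReal.ofReal (cP i j) + orH ρ Q cF cP j L' Q) := rfl

/-- The key analytic lemma: the OR cost-to-go dominates the exceedance probability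
times any lower bound `r` on the available recourse actions. -/
lemma tailProb_mul_le_orH {N : Type*} (ρ : N → PMF ℕ) {Q : ℕ} (hQ : 1 ≤ Q)
    (cF : N → ℝ) (cP : N → N → ℝ) (r : ℝ≥0∞) :
    ∀ (L' : List N) (j : N) (q : ℕ),
      (∀ a ∈ j :: L', r ≤ ENNReal.ofReal (cF a)) →
      (∀ a b, (a, b) ∈ orderedPairs (j :: L') → r ≤ ENNReal.ofReal (cP a b)) →
      tailProb ρ (j :: L') q * r ≤ orH ρ Q cF cP j L' q := by
  intro L'
  induction L' with
  | nil =>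
    intro j q hF hP
    rw [tailProb, orH, ← ENNReal.tsum_mul_right]
    refine ENNReal.tsum_le_tsum fun s => ?_
    rw [mul_right_comm]
    refine mul_le_mul_left ?_ _
    by_cases h : q < s
    · simp only [h, if_pos, one_mul]
      have h1 : (1 : ℝ≥0∞) ≤ (psi Q s q : ℝ≥0∞) := by
        exact_mod_cast Nat.one_le_cast.2 (one_le_psi hQ h)
      calc r ≤ ENNReal.ofReal (cF j) := hF j (by simp)
        _ ≤ ENNReal.ofReal (cF j) * (psi Q s q : ℝ≥0∞) := le_mul_of_one_le_right' h1
        _ ≤ _ := le_self_add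
    · simp only [h, if_neg, not_false_iff, tailProb, zero_mul]
      exact zero_le
  | cons l L'' ih =>
    intro j q hF hP
    rw [tailProb, orH, ← ENNReal.tsum_mul_right]
    refine ENNReal.tsum_le_tsum fun s => ?_
    rw [mul_right_comm]
    refine mul_le_mul_left ?_ _
    by_cases h : q < s
    · simp only [h, if_pos, one_mul]
      have h1 : (1 : ℝ≥0∞) ≤ (psi Q s q : ℝ≥0∞) := by
        exact_mod_cast Nat.one_le_cast.2 (one_le_psi hQ h)
      calc r ≤ ENNReal.ofReal (cF j) := hF j (by simp)
        _ ≤ ENNReal.ofReal (cF j) * (psi Q s q : ℝ≥0∞) := le_mul_of_one_le_right' h1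
        _ ≤ _ := le_self_add
    · push_neg at h
      rw [if_neg (by omega), psi_eq_zero h]
      simp only [Nat.cast_zero, mul_zero, zero_add, zero_mul, Nat.zero_mul]
      rw [orF_cons, le_min_iff]
      constructor
      · exact ih l (q - s)
          (fun a ha => hF a (List.mem_cons_of_mem j ha))
          (fun a b hab => hP a b (by
            show (a, b) ∈ (List.map (fun b => (j, b)) (l :: L'')) ++ orderedPairs (l :: L'')
            exact List.mem_append_right _ hab))
      · calc tailProb ρ (l :: L'') (q - s) * r
            ≤ 1 * r := mul_le_mul_left (tailProb_le_one ρ _ _) r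
          _ = r := one_mul r
          _ ≤ ENNReal.ofReal (cP j l) := hP j l (by
              show (j, l) ∈ (List.map (fun b => (j, b)) (l :: L'')) ++ orderedPairs (l :: L'')
              exact List.mem_append_left _ (by simp))
          _ ≤ _ := le_self_add

lemma measurable_listSum {N : Type*} (p : List N) :
    Measurable fun ω : N → ℕ => (p.map ω).sum := by
  induction p with
  | nil => simpa using measurable_const
  | cons j L ih =>
    simp only [List.map_cons, List.sum_cons]
    exact (measurable_pi_apply j).add ih

lemma measurable_indSum {N : Type*} (p : List N) (q : ℕ) :
    Measurable fun ω : N → ℕ => (if q < (p.map ω).sum then (1 : ℝ≥0∞) else 0) := by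
  have : (fun ω : N → ℕ => (if q < (p.map ω).sum then (1 : ℝ≥0∞) else 0)) =
      (fun n : ℕ => if q < n then (1 : ℝ≥0∞) else 0) ∘ (fun ω : N → ℕ => (p.map ω).sum) := rfl
  rw [this]
  exact (measurable_from_top).comp (measurable_listSum p)

lemma lmarginal_ind_le {N : Type*} [Fintype N] [DecidableEq N] (ρ : N → PMF ℕ) :
    ∀ (p : List N), p.Nodup → ∀ (q : ℕ) (T : Finset N), (∀ a ∈ p, a ∈ T) →
      ∀ (x : N → ℕ),
      (∫⋯∫⁻_T, (fun ω => if q < (p.map ω).sum then 1 else 0)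
          ∂(fun i => (ρ i).toMeasure)) x ≤ tailProb ρ p q := by
  intro p
  induction p with
  | nil =>
    intro _ q T _ x
    have : (fun ω : N → ℕ => if q < (([] : List N).map ω).sum then (1 : ℝ≥0∞) else 0)
        = fun _ => 0 := by
      funext ω; simp
    rw [this, tailProb]
    simp [lmarginal]
  | cons j L ih =>
    intro hp q T hT x
    obtain ⟨hj, hL⟩ := List.nodup_cons.1 hp
    have hjT : j ∈ T := hT j (by simp)
    rw [lmarginal_erase _ (measurable_indSum (j :: L) q) hjT]
    have key : ∀ s' : ℕ,
        (∫⋯∫⁻_(T.erase j), (fun ω => if q < ((j :: L).map ω).sum then 1 else 0)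
            ∂(fun i => (ρ i).toMeasure)) (Function.update x j s')
          ≤ (if q < s' then 1 else tailProb ρ L (q - s')) := by
      intro s'
      rw [lmarginal]
      by_cases hqs : q < s'
      · rw [if_pos hqs]
        calc ∫⁻ y : ∀ i : (T.erase j : Finset N), ℕ,
              (fun ω => if q < ((j :: L).map ω).sum then (1:ℝ≥0∞) else 0)
                (Function.updateFinset (Function.update x j s') (T.erase j) y)
              ∂(Measure.pi fun i : (T.erase j : Finset N) => (ρ i).toMeasure)
            ≤ ∫⁻ _ : ∀ i : (T.erase j : Finset N), ℕ, 1
              ∂(Measure.pi fun i : (T.erase j : Finset N) => (ρ i).toMeasure) := by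
              refine lintegral_mono fun y => ?_
              dsimp only
              split <;> simp
          _ = 1 := by simp
      · rw [if_neg hqs]
        push_neg at hqs
        calc ∫⁻ y : ∀ i : (T.erase j : Finset N), ℕ,
              (fun ω => if q < ((j :: L).map ω).sum then (1:ℝ≥0∞) else 0)
                (Function.updateFinset (Function.update x j s') (T.erase j) y)
              ∂(Measure.pi fun i : (T.erase j : Finset N) => (ρ i).toMeasure)
            ≤ ∫⁻ y : ∀ i : (T.erase j : Finset N), ℕ,
              (fun ω => if q - s' < (L.map ω).sum then (1:ℝ≥0∞) else 0)
                (Function.updateFinset (Function.update x j s') (T.erase j) y)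
              ∂(Measure.pi fun i : (T.erase j : Finset N) => (ρ i).toMeasure) := by
              refine lintegral_mono fun y => ?_
              set ω := Function.updateFinset (Function.update x j s') (T.erase j) y with hω
              have hωj : ω j = s' := by
                rw [hω, Function.updateFinset]
                simp [Finset.notMem_erase j T]
              simp only [List.map_cons, List.sum_cons, hωj]
              by_cases h2 : q - s' < (L.map ω).sum
              · rw [if_pos h2]
                split <;> simp
              · rw [if_neg h2, if_neg (by omega)]
          _ ≤ tailProb ρ L (q - s') := by
              exact ih hL (q - s') (T.erase j)
                (fun a ha => Finset.mem_erase.2 ⟨fun hc => hj (hc ▸ ha), hT a (by simp [ha])⟩)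
                (Function.update x j s')
    calc ∫⁻ s', (∫⋯∫⁻_(T.erase j), (fun ω => if q < ((j :: L).map ω).sum then 1 else 0)
            ∂(fun i => (ρ i).toMeasure)) (Function.update x j s') ∂(ρ j).toMeasure
        ≤ ∫⁻ s', (if q < s' then 1 else tailProb ρ L (q - s')) ∂(ρ j).toMeasure :=
          lintegral_mono key
      _ = ∑' s' : ℕ, (if q < s' then 1 else tailProb ρ L (q - s')) * (ρ j).toMeasure {s'} :=
          lintegral_countable' _
      _ = tailProb ρ (j :: L) q := by
          rw [tailProb]
          refine tsum_congr fun s' => ?_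
          rw [(ρ j).toMeasure_apply_singleton s' (measurableSet_singleton s')]

lemma measure_le_tailProb {N : Type*} [Fintype N] [DecidableEq N] (ρ : N → PMF ℕ) (p : List N)
    (hp : p.Nodup) (q : ℕ) :
    Measure.pi (fun i => (ρ i).toMeasure) {ω : N → ℕ | q < (p.map ω).sum}
      ≤ tailProb ρ p q := by
  have hE : MeasurableSet {ω : N → ℕ | q < (p.map ω).sum} := by
    have : {ω : N → ℕ | q < (p.map ω).sum}
        = (fun ω : N → ℕ => (p.map ω).sum) ⁻¹' {n | q < n} := rfl
    rw [this]
    exact measurable_listSum p ((Set.to_countable _).measurableSet)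
  rw [← lintegral_indicator_one hE]
  have hfun : ∀ ω : N → ℕ, ({ω : N → ℕ | q < (p.map ω).sum}).indicator
      (1 : (N → ℕ) → ℝ≥0∞) ω = if q < (p.map ω).sum then 1 else 0 := by
    intro ω
    rw [Set.indicator_apply]
    rfl
  calc ∫⁻ ω, ({ω : N → ℕ | q < (p.map ω).sum}).indicator 1 ω
        ∂Measure.pi (fun i => (ρ i).toMeasure)
      = ∫⁻ ω, (if q < (p.map ω).sum then 1 else 0)
        ∂Measure.pi (fun i => (ρ i).toMeasure) := by
        exact lintegral_congr hfun
    _ = (∫⋯∫⁻_Finset.univ, (fun ω => if q < (p.map ω).sum then 1 else 0)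
        ∂(fun i => (ρ i).toMeasure)) (fun _ => 0) :=
        lintegral_eq_lmarginal_univ (fun _ => 0)
    _ ≤ tailProb ρ p q := lmarginal_ind_le ρ p hp q Finset.univ (fun a _ => Finset.mem_univ a)
        (fun _ => 0)

/-- the OR recourse of a route is at least the probability that its total
demand exceeds the capacity, times the cheapest available recourse action
`c^R = min( min_j c^F_{i_j}, min_{j<l} c^P_{i_j,i_l} )` (the joint law of the independent
demands being the product of their probability mass functions). -/
theorem or_recourse_lower_bound
    {N : Type*} [Fintype N] (ρ : N → PMF ℕ) (Q : ℕ) (hQ : 1 ≤ Q)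
    (hmean : ∀ i, ∑' s : ℕ, (s : ℝ≥0∞) * ρ i s ≠ ⊤)
    (bP bF : ℝ) (hbP : 0 ≤ bP) (hbPF : bP ≤ bF)
    (c0 : N → ℝ) (c : N → N → ℝ)
    (hc0 : ∀ i, 0 ≤ c0 i) (hc : ∀ i j, 0 ≤ c i j) (hsymm : ∀ i j, c i j = c j i)
    (htri1 : ∀ i j, c0 j ≤ c0 i + c i j)
    (htri2 : ∀ i j, c i j ≤ c0 i + c0 j)
    (htri3 : ∀ i j k, c i k ≤ c i j + c j k)
    (p : List N) (hp : p.Nodup) (hne : p ≠ [])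
    (cR : ℝ)
    (hcR : cR = sInf ({x : ℝ | ∃ j ∈ p, x = bF + 2 * c0 j} ∪
      {x : ℝ | ∃ q ∈ orderedPairs p, x = bP + c0 q.1 + c0 q.2 - c q.1 q.2})) :
    Measure.pi (fun i => (ρ i).toMeasure) {ω : N → ℕ | Q < (p.map ω).sum}
        * ENNReal.ofReal cR
      ≤ QbarOR ρ Q (fun a => bF + 2 * c0 a) (fun a b => bP + c0 a + c0 b - c a b) p := by
  haveI := Classical.decEq N
  obtain ⟨j, L', rfl⟩ : ∃ j L', p = j :: L' := by
    cases p with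
    | nil => exact absurd rfl hne
    | cons j L' => exact ⟨j, L', rfl⟩
  set S := ({x : ℝ | ∃ a ∈ j :: L', x = bF + 2 * c0 a} ∪
      {x : ℝ | ∃ q ∈ orderedPairs (j :: L'), x = bP + c0 q.1 + c0 q.2 - c q.1 q.2}) with hS
  have hbdd : BddBelow S := by
    refine ⟨0, fun x hx => ?_⟩
    rcases hx with ⟨a, _, rfl⟩ | ⟨ab, _, rfl⟩
    · have := hc0 a; linarith
    · have := htri2 ab.1 ab.2; linarith
  have hF : ∀ a ∈ j :: L', ENNReal.ofReal cR ≤ ENNReal.ofReal (bF + 2 * c0 a) := by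
    intro a ha
    apply ENNReal.ofReal_le_ofReal
    rw [hcR]
    exact csInf_le hbdd (Or.inl ⟨a, ha, rfl⟩)
  have hP : ∀ a b, (a, b) ∈ orderedPairs (j :: L') →
      ENNReal.ofReal cR ≤ ENNReal.ofReal (bP + c0 a + c0 b - c a b) := by
    intro a b hab
    apply ENNReal.ofReal_le_ofReal
    rw [hcR]
    exact csInf_le hbdd (Or.inr ⟨(a, b), hab, rfl⟩)
  calc Measure.pi (fun i => (ρ i).toMeasure) {ω : N → ℕ | Q < ((j :: L').map ω).sum}
        * ENNReal.ofReal cR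
      ≤ tailProb ρ (j :: L') Q * ENNReal.ofReal cR :=
        mul_le_mul_left (measure_le_tailProb ρ (j :: L') hp Q) _
    _ ≤ orH ρ Q (fun a => bF + 2 * c0 a) (fun a b => bP + c0 a + c0 b - c a b) j L' Q :=
        tailProb_mul_le_orH ρ hQ _ _ _ L' j Q hF hP
    _ = QbarOR ρ Q (fun a => bF + 2 * c0 a) (fun a b => bP + c0 a + c0 b - c a b) (j :: L') :=
        rfl
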